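/- For every μ ∈ ℝ and every λ ≥ 0, one has max{ 1 − e^{μ − λ}, 0 } + min{ e^{μ + λ} − 1, 0 } ≤ 1 − e^{−2λ}, with equality at μ = −λ. -/

import Mathlib

/-!
Write `b = e^{μ+λ}` and `c = e^{-2λ} ∈ (0, 1]`, so that `e^{μ-λ} = b c`. If `b ≥ 1` the
minimum vanishes and `1 - b c ≤ 1 - c`; if `b < 1` both clipped terms are active and the sum
is `b (1 - c) ≤ 1 - c`.
-/

lemma max_one_sub_mul_add_min_sub_one_le {b c : ℝ} (hc0 : 0 ≤ c) (hc1 : c ≤ 1) :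
    max (1 - b * c) 0 + min (b - 1) 0 ≤ 1 - c := by
  rcases le_or_gt 1 b with hb | hb
  · rw [min_eq_right (by linarith), add_zero]
    exact max_le (by nlinarith) (by linarith)
  · have hbc : b * c ≤ 1 := by nlinarith [mul_nonneg (sub_nonneg.2 hb.le) hc0]
    rw [max_eq_left (by linarith), min_eq_left (by linarith)]
    nlinarith [mul_nonneg (sub_nonneg.2 hb.le) (sub_nonneg.2 hc1)]

theorem worst_case_error_probability_bound (μ lam : ℝ) (hlam : 0 ≤ lam) :
    (max (1 - Real.exp (μ - lam)) 0 + min (Real.exp (μ + lam) - 1) 0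
      ≤ 1 - Real.exp (-(2 * lam))) ∧
    (max (1 - Real.exp (-lam - lam)) 0 + min (Real.exp (-lam + lam) - 1) 0
      = 1 - Real.exp (-(2 * lam))) := by
  have hc1 : Real.exp (-(2 * lam)) ≤ 1 := Real.exp_le_one_iff.mpr (by linarith)
  refine ⟨?_, ?_⟩
  · have hsplit : Real.exp (μ - lam) = Real.exp (μ + lam) * Real.exp (-(2 * lam)) := by
      rw [← Real.exp_add]; ring_nf
    rw [hsplit]
    exact max_one_sub_mul_add_min_sub_one_le (Real.exp_pos _).le hc1
  · rw [show -lam - lam = -(2 * lam) by ring, neg_add_cancel, Real.exp_zero, sub_self,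
      min_self, add_zero, max_eq_left (sub_nonneg.2 hc1)]
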